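/- Let p be a pmf on ℕ with finite mean, and define F : [0,∞) → ℝ by F(c) = sup{ H(w ⋆ p) : w a pmf on ℕ with mean ∑ₙ n·w(n) ≤ c }, where (w ⋆ p)(n) = ∑_{j=0}^{n} w(j)·p(n−j). Then F(c) → H(p) as c → 0⁺; equivalently, sup{ H(w ⋆ p) − H(p) : w a pmf on ℕ with mean ≤ c } tends to 0 as c → 0⁺. -/

import Mathlib

/-!
The point mass at `0` is admissible for every `c ≥ 0` and gives `H(p) ≤ F c`. Conversely,
`H(w ⋆ p) ≤ H(w) + H(p)` because `-q log q ≤ ∑ -aᵢ log aᵢ` for `q = ∑ aᵢ`, and Gibbs' inequality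
against the geometric law `(1 - c) cⁿ` bounds the entropy of every `w` with mean at most `c < 1`
by `-c log c - log (1 - c)`, which tends to `0` as `c → 0⁺`.
-/

open scoped BigOperators

/-- Shannon entropy (natural log) of a pmf on ℕ. -/
noncomputable def Hent (p : ℕ → ℝ) : ℝ := ∑' n, -(p n * Real.log (p n))

/-- `p` is a probability mass function on ℕ. -/
def IsPmf (p : ℕ → ℝ) : Prop := (∀ n, 0 ≤ p n) ∧ (∑' n, p n) = 1

/-- pmf of `W + S` for independent `W ~ w`, `S ~ p`. -/
noncomputable def convPmf (w p : ℕ → ℝ) : ℕ → ℝ :=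
  fun n => ∑ j ∈ Finset.range (n + 1), w j * p (n - j)

/-- pmf of `(S - τ)₊` for `S ~ p` (truncated subtraction on ℕ). -/
noncomputable def truncSubPmf (p : ℕ → ℝ) (τ : ℕ) : ℕ → ℝ :=
  fun n => ∑' i, if i - τ = n then p i else 0

/-- pmf of `(X - T)₊` for independent `X ~ x`, `T ~ q`. -/
noncomputable def subPairPmf (x q : ℕ → ℝ) : ℕ → ℝ :=
  fun n => ∑' i, ∑' j, if i - j = n then x i * q j else 0

/-- `w` has (well-defined) mean at most `c`. -/
def MeanLe (w : ℕ → ℝ) (c : ℝ) : Prop :=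
  Summable (fun n : ℕ => (n : ℝ) * w n) ∧ (∑' n : ℕ, (n : ℝ) * w n) ≤ c

/-- Output entropies `H((X - (S₁ - τ)₊)₊ + S₂)` over admissible laws of `X`
(independent of `(S₁, S₂)`, with `E[(X - (S₁ - τ)₊)₊] ≤ c`);
this is the generalized-feedback maximum output entropy problem. -/
def genFB (p : ℕ → ℝ) (τ : ℕ) (c : ℝ) : Set ℝ :=
  {h | ∃ x : ℕ → ℝ, IsPmf x ∧
    MeanLe (subPairPmf x (truncSubPmf p τ)) c ∧
    h = Hent (convPmf (subPairPmf x (truncSubPmf p τ)) p)}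

/-- Output entropies `H(W + S)` over admissible laws of `W` (independent of `S`,
nonnegative, with `E[W] ≤ c`); this is the full-feedback maximum output entropy problem. -/
def fullFB (p : ℕ → ℝ) (c : ℝ) : Set ℝ :=
  {h | ∃ w : ℕ → ℝ, IsPmf w ∧ MeanLe w c ∧ h = Hent (convPmf w p)}


open Real Filter Topology Finset

lemma hent_eq_tsum_negMulLog (p : ℕ → ℝ) : Hent p = ∑' n, negMulLog (p n) := by
  simp only [Hent, negMulLog, neg_mul]

lemma Real.negMulLog_le_mul_neg_log_add_sub {x y : ℝ} (hx : 0 ≤ x) (hy : 0 < y) :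
    negMulLog x ≤ x * -log y + (y - x) := by
  rcases hx.eq_or_lt with rfl | hx
  · simpa using hy.le
  have h := mul_le_mul_of_nonneg_left (log_le_sub_one_of_pos (div_pos hy hx)) hx.le
  have hxy : x * (y / x - 1) = y - x := by field_simp
  rw [log_div hy.ne' hx.ne', hxy] at h
  rw [negMulLog]
  linarith

lemma Real.negMulLog_sum_le {ι : Type*} {s : Finset ι} {a : ι → ℝ} (ha : ∀ i ∈ s, 0 ≤ a i) :
    negMulLog (∑ i ∈ s, a i) ≤ ∑ i ∈ s, negMulLog (a i) := by
  calc negMulLog (∑ i ∈ s, a i) = ∑ i ∈ s, a i * -log (∑ j ∈ s, a j) := by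
        rw [negMulLog, ← sum_mul]; ring
    _ ≤ ∑ i ∈ s, negMulLog (a i) := sum_le_sum fun i hi => by
        rcases (ha i hi).eq_or_lt with h | h
        · simp [← h]
        · have := log_le_log h (single_le_sum ha hi)
          rw [negMulLog]
          nlinarith

section

variable {p w : ℕ → ℝ} {θ c : ℝ}

namespace IsPmf

lemma summable (hp : IsPmf p) : Summable p := by
  by_contra h
  simpa [tsum_eq_zero_of_not_summable h] using hp.2

lemma le_one (hp : IsPmf p) (n : ℕ) : p n ≤ 1 :=
  hp.2 ▸ hp.summable.le_tsum n fun j _ => hp.1 j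

lemma negMulLog_nonneg (hp : IsPmf p) (n : ℕ) : 0 ≤ negMulLog (p n) :=
  Real.negMulLog_nonneg (hp.1 n) (hp.le_one n)

lemma conv (hw : IsPmf w) (hp : IsPmf p) : IsPmf (convPmf w p) :=
  ⟨fun n => sum_nonneg fun j _ => mul_nonneg (hw.1 j) (hp.1 _), by
    simpa [_root_.convPmf, hw.2, hp.2] using
      (hasSum_sum_range_mul_of_summable_norm hw.summable.norm hp.summable.norm).tsum_eq⟩

-- Gibbs' inequality against the geometric pmf `(1 - θ) θ ^ n`.
lemma negMulLog_le_geometric (hw : IsPmf w) (hθ0 : 0 < θ) (hθ1 : θ < 1) (n : ℕ) :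
    negMulLog (w n) ≤ w n * -log (1 - θ) + n * w n * -log θ + ((1 - θ) * θ ^ n - w n) := by
  have h := negMulLog_le_mul_neg_log_add_sub (hw.1 n) (mul_pos (sub_pos.2 hθ1) (pow_pos hθ0 n))
  rw [log_mul (sub_pos.2 hθ1).ne' (pow_ne_zero n hθ0.ne'), log_pow] at h
  linarith

lemma hasSum_geometric_bound (hw : IsPmf w) (hm : Summable fun n : ℕ => (n : ℝ) * w n)
    (hθ0 : 0 < θ) (hθ1 : θ < 1) :
    HasSum (fun n : ℕ => w n * -log (1 - θ) + n * w n * -log θ + ((1 - θ) * θ ^ n - w n))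
      (-log (1 - θ) + (∑' n : ℕ, n * w n) * -log θ) := by
  have h := ((hw.summable.hasSum.mul_right (-log (1 - θ))).add (hm.hasSum.mul_right (-log θ))).add
    (((hasSum_geometric_of_lt_one hθ0.le hθ1).mul_left (1 - θ)).sub hw.summable.hasSum)
  rwa [hw.2, mul_inv_cancel₀ (sub_pos.2 hθ1).ne', one_mul, sub_self, add_zero] at h

lemma summable_negMulLog (hw : IsPmf w) (hm : Summable fun n : ℕ => (n : ℝ) * w n) :
    Summable fun n => negMulLog (w n) :=
  .of_nonneg_of_le hw.negMulLog_nonneg (hw.negMulLog_le_geometric one_half_pos one_half_lt_one)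
    (hw.hasSum_geometric_bound hm one_half_pos one_half_lt_one).summable

lemma hent_le_of_meanLe (hw : IsPmf w) (hm : MeanLe w c) (hc0 : 0 < c) (hc1 : c < 1) :
    Hent w ≤ negMulLog c - log (1 - c) := by
  have hlog : 0 ≤ -log c := neg_nonneg.2 (log_nonpos hc0.le hc1.le)
  rw [hent_eq_tsum_negMulLog]
  calc ∑' n, negMulLog (w n) ≤ -log (1 - c) + (∑' n : ℕ, n * w n) * -log c :=
        hasSum_le (hw.negMulLog_le_geometric hc0 hc1) (hw.summable_negMulLog hm.1).hasSum
          (hw.hasSum_geometric_bound hm.1 hc0 hc1)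
    _ ≤ -log (1 - c) + c * -log c := by gcongr; exact hm.2
    _ = negMulLog c - log (1 - c) := by rw [negMulLog]; ring

lemma hent_convPmf_le (hw : IsPmf w) (hp : IsPmf p)
    (hw' : Summable fun n => negMulLog (w n)) (hp' : Summable fun n => negMulLog (p n)) :
    Hent (convPmf w p) ≤ Hent w + Hent p := by
  have hA := hasSum_sum_range_mul_of_summable_norm hw'.norm hp.summable.norm
  have hB := hasSum_sum_range_mul_of_summable_norm hw.summable.norm hp'.norm
  rw [hp.2, mul_one] at hA
  rw [hw.2, one_mul] at hB
  have hle : ∀ n, negMulLog (convPmf w p n) ≤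
      ∑ k ∈ range (n + 1), negMulLog (w k) * p (n - k) +
        ∑ k ∈ range (n + 1), w k * negMulLog (p (n - k)) := fun n =>
    calc negMulLog (convPmf w p n) ≤ ∑ k ∈ range (n + 1), negMulLog (w k * p (n - k)) :=
          negMulLog_sum_le fun k _ => mul_nonneg (hw.1 k) (hp.1 _)
      _ = _ := by
          rw [← sum_add_distrib]
          exact sum_congr rfl fun k _ => by rw [negMulLog_mul]; ring
  rw [hent_eq_tsum_negMulLog, hent_eq_tsum_negMulLog, hent_eq_tsum_negMulLog]
  exact hasSum_le hle
    (Summable.of_nonneg_of_le (hw.conv hp).negMulLog_nonneg hle (hA.add hB).summable).hasSum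
    (hA.add hB)

end IsPmf

lemma isPmf_pi_single_zero : IsPmf (Pi.single 0 1) :=
  ⟨fun n => by rcases n with _ | n <;> simp, by simp⟩

lemma meanLe_pi_single_zero (hc : 0 ≤ c) : MeanLe (Pi.single 0 1) c := by
  have h : (fun n : ℕ => (n : ℝ) * (Pi.single 0 1 : ℕ → ℝ) n) = fun _ => 0 := by
    ext n; rcases n with _ | n <;> simp
  exact ⟨h ▸ summable_zero, by rwa [h, tsum_zero]⟩

lemma convPmf_pi_single_zero (p : ℕ → ℝ) : convPmf (Pi.single 0 1) p = p := by
  ext n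
  simp [convPmf, Pi.single_apply]

lemma hent_mem_fullFB (p : ℕ → ℝ) (hc : 0 ≤ c) : Hent p ∈ fullFB p c :=
  ⟨_, isPmf_pi_single_zero, meanLe_pi_single_zero hc, by rw [convPmf_pi_single_zero]⟩

lemma IsPmf.le_of_mem_fullFB {h : ℝ} (hp : IsPmf p)
    (hp' : Summable fun n => negMulLog (p n)) (hc0 : 0 < c) (hc1 : c < 1) (hh : h ∈ fullFB p c) :
    h ≤ Hent p + (negMulLog c - log (1 - c)) := by
  obtain ⟨w, hw, hm, rfl⟩ := hh
  linarith [hw.hent_convPmf_le hp (hw.summable_negMulLog hm.1) hp', hw.hent_le_of_meanLe hm hc0 hc1]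

end

lemma tendsto_negMulLog_sub_log_one_sub :
    Tendsto (fun c : ℝ => negMulLog c - log (1 - c)) (𝓝 0) (𝓝 0) := by
  have : ContinuousAt (fun c : ℝ => negMulLog c - log (1 - c)) 0 := by fun_prop (disch := norm_num)
  simpa using this.tendsto

/-- for a pmf `p` on ℕ with finite mean, the maximum output entropy
`F c = sup { H(w ⋆ p) : w a pmf on ℕ with mean ≤ c }` tends to `H(p)` as `c → 0⁺`. -/
theorem fullFB_entropy_tendsto_Hp (p : ℕ → ℝ) (hp : IsPmf p)
    (hmean : Summable (fun n : ℕ => (n : ℝ) * p n))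
    (F : ℝ → ℝ) (hF : ∀ c : ℝ, F c = sSup (fullFB p c)) :
    Filter.Tendsto F (nhdsWithin 0 (Set.Ioi (0 : ℝ))) (nhds (Hent p)) := by
  have hp' := hp.summable_negMulLog hmean
  have hbound : Tendsto (fun c => Hent p + (negMulLog c - log (1 - c))) (𝓝[>] 0) (𝓝 (Hent p)) := by
    simpa using (tendsto_negMulLog_sub_log_one_sub.const_add (Hent p)).mono_left nhdsWithin_le_nhds
  refine tendsto_of_tendsto_of_tendsto_of_le_of_le' tendsto_const_nhds hbound ?_ ?_ <;>
    filter_upwards [Ioo_mem_nhdsGT zero_lt_one] with c ⟨hc0, hc1⟩ <;> rw [hF]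
  · exact le_csSup ⟨_, fun h => hp.le_of_mem_fullFB hp' hc0 hc1⟩ (hent_mem_fullFB p hc0.le)
  · exact csSup_le ⟨_, hent_mem_fullFB p hc0.le⟩ fun h => hp.le_of_mem_fullFB hp' hc0 hc1
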